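/- arXiv:math/0005063 — 2 statements merged into one kernel-verified Lean document; each statement's English description precedes it below -/
import Mathlib

section
/- Let V be a congruence-modular variety of algebras, B ∈ V, and μ, α congruences on B with commutator [μ, α] = ⊥. Then α laxly centralizes μ with respect to V. Specifically, the algebra C = B(μ) = {(b,b') ∈ B × B : b μ b'}, the second-coordinate projection π : C → B, the congruence β = ker π_μ (kernel of the first-coordinate projection), and the congruence γ = Δ_{μ,α} (the kernel of the pushout of the diagonal embedding Δ : B → B(μ) along the natural map B → B/α) witness this: →π β = μ, →π γ = α, and β ∧ γ = ⊥. -/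
/-!
Basic universal algebra: signatures, algebras, homomorphisms, congruences
(forming a complete lattice), generated congruences, images and preimages of
congruences, quotient algebras, subalgebras, products, ultraproducts,
varieties (classes closed under H, S, P), the term-condition commutator,
relatively free algebras, and lax centrality.
-/

universe u v

namespace UAlg

/-- A (finitary) signature: a type of operation symbols with arities. -/
structure Signature : Type (u + 1) where
  ops : Type u
  arity : ops → ℕ

/-- An algebra of signature `S`. -/
structure Algebra (S : Signature.{u}) : Type (u + 1) where
  carrier : Type u
  interp : ∀ o : S.ops, (Fin (S.arity o) → carrier) → carrier

variable {S : Signature.{u}}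

/-- A homomorphism of algebras. -/
structure Hom (A B : Algebra S) : Type u where
  toFun : A.carrier → B.carrier
  map_interp : ∀ (o : S.ops) (a : Fin (S.arity o) → A.carrier),
    toFun (A.interp o a) = B.interp o (fun i => toFun (a i))

/-- Composition of homomorphisms. -/
def Hom.comp {A B C : Algebra S} (g : Hom B C) (f : Hom A B) : Hom A C where
  toFun := g.toFun ∘ f.toFun
  map_interp o a := by
    simp only [Function.comp, f.map_interp, g.map_interp]

/-- A congruence on an algebra: an equivalence relation compatible with the
operations. -/
structure Cong (A : Algebra S) : Type u where
  r : A.carrier → A.carrier → Prop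
  iseqv : Equivalence r
  compat : ∀ (o : S.ops) (a b : Fin (S.arity o) → A.carrier),
    (∀ i, r (a i) (b i)) → r (A.interp o a) (A.interp o b)

namespace Cong

variable {A : Algebra S}

theorem ext {c d : Cong A} (h : ∀ x y, c.r x y ↔ d.r x y) : c = d := by
  cases c; cases d
  simp only [mk.injEq]
  funext x y
  exact propext (h x y)

instance : PartialOrder (Cong A) where
  le c d := ∀ x y, c.r x y → d.r x y
  le_refl c := fun _ _ h => h
  le_trans a b c hab hbc := fun x y h => hbc x y (hab x y h)
  le_antisymm a b h1 h2 := ext fun x y => ⟨h1 x y, h2 x y⟩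

instance : InfSet (Cong A) where
  sInf s :=
    { r := fun x y => ∀ c ∈ s, c.r x y
      iseqv :=
        ⟨fun x c _ => c.iseqv.refl x,
         fun h c hc => c.iseqv.symm (h c hc),
         fun h1 h2 c hc => c.iseqv.trans (h1 c hc) (h2 c hc)⟩
      compat := fun o a b h c hc => c.compat o a b fun i => h i c hc }

instance : CompleteLattice (Cong A) :=
  completeLatticeOfInf _ (fun s =>
    ⟨fun c hc x y h => h c hc, fun _ hd x y h c hc => hd hc x y h⟩)

end Cong

/-- The congruence generated by a binary relation. -/
def conGen (A : Algebra S) (s : A.carrier → A.carrier → Prop) : Cong A :=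
  sInf {c : Cong A | ∀ x y, s x y → c.r x y}

/-- The kernel congruence of a homomorphism. -/
def Hom.ker {A B : Algebra S} (f : Hom A B) : Cong A where
  r x y := f.toFun x = f.toFun y
  iseqv := ⟨fun _ => rfl, Eq.symm, Eq.trans⟩
  compat o a b h := by
    show f.toFun (A.interp o a) = f.toFun (A.interp o b)
    rw [f.map_interp, f.map_interp]
    exact congrArg _ (funext h)

/-- `conMap f α` (written `→f α` in the paper) is the congruence of `B`
generated by the image `f(α)` of the congruence `α` of `A`. -/
def conMap {A B : Algebra S} (f : Hom A B) (α : Cong A) : Cong B :=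
  conGen B (fun x y => ∃ a a', α.r a a' ∧ f.toFun a = x ∧ f.toFun a' = y)

/-- The inverse image `f⁻¹(β)` of a congruence. -/
def conComap {A B : Algebra S} (f : Hom A B) (β : Cong B) : Cong A where
  r x y := β.r (f.toFun x) (f.toFun y)
  iseqv :=
    ⟨fun _ => β.iseqv.refl _, fun h => β.iseqv.symm h,
     fun h1 h2 => β.iseqv.trans h1 h2⟩
  compat o a b h := by
    show β.r (f.toFun (A.interp o a)) (f.toFun (A.interp o b))
    rw [f.map_interp, f.map_interp]
    exact β.compat o _ _ h

/-- The setoid underlying a congruence. -/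
def Cong.toSetoid {A : Algebra S} (c : Cong A) : Setoid A.carrier :=
  ⟨c.r, c.iseqv⟩

/-- The quotient algebra of an algebra by a congruence. -/
noncomputable def quotAlg (A : Algebra S) (c : Cong A) : Algebra S where
  carrier := Quotient c.toSetoid
  interp o a := Quotient.mk c.toSetoid (A.interp o (fun i => (a i).out))

/-- The natural (quotient) homomorphism `A → A/c`. -/
def natHom (A : Algebra S) (c : Cong A) : Hom A (quotAlg A c) where
  toFun := Quotient.mk c.toSetoid
  map_interp o a := by
    apply Quotient.sound
    apply c.compat
    intro i
    show c.r (a i) (Quotient.mk c.toSetoid (a i)).out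
    exact Quotient.exact ((Quotient.out_eq (Quotient.mk c.toSetoid (a i))).symm)

/-- A subuniverse: a subset closed under the operations. -/
structure Subuniverse (A : Algebra S) : Type u where
  carrier : Set A.carrier
  closed : ∀ (o : S.ops) (a : Fin (S.arity o) → A.carrier),
    (∀ i, a i ∈ carrier) → A.interp o a ∈ carrier

/-- The subalgebra determined by a subuniverse. -/
def Subuniverse.alg {A : Algebra S} (s : Subuniverse A) : Algebra S where
  carrier := {x // x ∈ s.carrier}
  interp o a := ⟨A.interp o (fun i => (a i).1), s.closed o _ (fun i => (a i).2)⟩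

/-- The product of a family of algebras. -/
def prodAlg {ι : Type u} (A : ι → Algebra S) : Algebra S where
  carrier := ∀ i, (A i).carrier
  interp o a i := (A i).interp o (fun j => a j i)

/-- A variety: a class of algebras closed under homomorphic images,
subalgebras, and products. -/
structure IsVariety (V : Algebra S → Prop) : Prop where
  closed_hom : ∀ (A B : Algebra S) (f : Hom A B),
    Function.Surjective f.toFun → V A → V B
  closed_sub : ∀ (A : Algebra S) (s : Subuniverse A), V A → V s.alg
  closed_prod : ∀ (ι : Type u) (A : ι → Algebra S), (∀ i, V (A i)) → V (prodAlg A)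

/-- `α` laxly centralizes `μ` with respect to the class `V`. -/
def LaxCentralizes (V : Algebra S → Prop) (B : Algebra S) (μ α : Cong B) : Prop :=
  ∃ C : Algebra S, V C ∧ ∃ (π : Hom C B) (β γ : Cong C),
    Function.Surjective π.toFun ∧ μ ≤ conMap π β ∧ α ≤ conMap π γ ∧ β ⊓ γ = ⊥

/-- `B` is a homomorphic image of a member of `K`. -/
def InH (K : Algebra S → Prop) (B : Algebra S) : Prop :=
  ∃ A, K A ∧ ∃ f : Hom A B, Function.Surjective f.toFun

/-- `B` embeds into a product of members of `K`, i.e. `B ∈ SP(K)`. -/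
def InSP (K : Algebra S → Prop) (B : Algebra S) : Prop :=
  ∃ (ι : Type u) (A : ι → Algebra S), (∀ i, K (A i)) ∧
    ∃ f : Hom B (prodAlg A), Function.Injective f.toFun

/-- `B ∈ HSP(K)`: `B` is a homomorphic image of an algebra embeddable in a
product of members of `K`. -/
def InHSP (K : Algebra S → Prop) (B : Algebra S) : Prop :=
  ∃ C : Algebra S, InSP K C ∧ ∃ f : Hom C B, Function.Surjective f.toFun

/-- The congruence on a product given by an ultrafilter on the index set. -/
def ultraCong {ι : Type u} (A : ι → Algebra S) (U : Ultrafilter ι) :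
    Cong (prodAlg A) where
  r x y := {i | x i = y i} ∈ U
  iseqv := by
    refine ⟨fun x => ?_, fun {x y} h => ?_, fun {x y z} h1 h2 => ?_⟩
    · have : {i | x i = x i} = Set.univ := by ext i; simp
      rw [this]; exact Filter.univ_mem
    · have : {i | y i = x i} = {i | x i = y i} := by ext i; exact eq_comm
      rw [this]; exact h
    · refine Filter.mem_of_superset (Filter.inter_mem h1 h2) ?_
      intro i hi
      exact hi.1.trans hi.2
  compat o a b h := by
    have h1 : (⋂ j, {i | a j i = b j i}) ∈ (U : Filter ι) :=
      (Filter.iInter_mem).2 h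
    refine Filter.mem_of_superset h1 ?_
    intro i hi
    simp only [Set.mem_iInter, Set.mem_setOf_eq] at hi
    show (A i).interp o (fun j => a j i) = (A i).interp o (fun j => b j i)
    exact congrArg _ (funext hi)

/-- `B ∈ HSP_u(K)`: `B` is a homomorphic image of an algebra embeddable in an
ultraproduct of members of `K`. -/
def InHSPu (K : Algebra S → Prop) (B : Algebra S) : Prop :=
  ∃ (ι : Type u) (A : ι → Algebra S) (U : Ultrafilter ι), (∀ i, K (A i)) ∧
    ∃ C : Algebra S,
      (∃ g : Hom C (quotAlg (prodAlg A) (ultraCong A U)),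
        Function.Injective g.toFun) ∧
      ∃ f : Hom C B, Function.Surjective f.toFun

/-- `μ` is the monolith of `B`: the minimum nontrivial congruence.
In particular its existence means `B` is subdirectly irreducible. -/
def IsMonolith (B : Algebra S) (μ : Cong B) : Prop :=
  μ ≠ ⊥ ∧ ∀ θ : Cong B, θ ≠ ⊥ → μ ≤ θ

/-- Terms of signature `S` over a set `X` of variables. -/
inductive Tm (S : Signature.{u}) (X : Type v) : Type max u v where
  | var : X → Tm S X
  | app : (o : S.ops) → (Fin (S.arity o) → Tm S X) → Tm S X

/-- Evaluation of a term in an algebra under an assignment of the variables. -/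
def Tm.eval {X : Type v} (A : Algebra S) (v : X → A.carrier) :
    Tm S X → A.carrier
  | .var x => v x
  | .app o t => A.interp o (fun i => Tm.eval A v (t i))

/-- The (term-condition) centralizing relation `C(α, β; δ)`. -/
def Centralizes {A : Algebra S} (α β δ : Cong A) : Prop :=
  ∀ (n : ℕ) (t : Tm S (Unit ⊕ Fin n)) (a b : A.carrier)
    (c d : Fin n → A.carrier),
    α.r a b → (∀ i, β.r (c i) (d i)) →
    δ.r (t.eval A (Sum.elim (fun _ => a) c)) (t.eval A (Sum.elim (fun _ => a) d)) →
    δ.r (t.eval A (Sum.elim (fun _ => b) c)) (t.eval A (Sum.elim (fun _ => b) d))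

/-- The commutator `[α, β]`: the least congruence `δ` such that `α`
centralizes `β` modulo `δ` (the Freese–McKenzie commutator, which is the
modular commutator in congruence-modular varieties). -/
def commutator {A : Algebra S} (α β : Cong A) : Cong A :=
  sInf {δ : Cong A | Centralizes α β δ}

/-- The term algebra over a set of variables. -/
def termAlg (S : Signature.{u}) (X : Type u) : Algebra S :=
  ⟨Tm S X, Tm.app⟩

/-- The congruence of `V`-equations on the term algebra: two terms are related
iff they evaluate the same way in every member of `V`. -/
def eqThy (V : Algebra S → Prop) (X : Type u) : Cong (termAlg S X) where
  r s t := ∀ A : Algebra S, V A → ∀ v : X → A.carrier, s.eval A v = t.eval A v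
  iseqv :=
    ⟨fun _ _ _ _ => rfl, fun h A hA v => (h A hA v).symm,
     fun h1 h2 A hA v => (h1 A hA v).trans (h2 A hA v)⟩
  compat o a b h A hA v := by
    show Tm.eval A v (Tm.app o a) = Tm.eval A v (Tm.app o b)
    simp only [Tm.eval]
    exact congrArg _ (funext fun i => h i A hA v)

/-- The relatively free algebra of `V` on the set `X` of generators. -/
noncomputable def freeAlg (V : Algebra S → Prop) (X : Type u) : Algebra S :=
  quotAlg (termAlg S X) (eqThy V X)

/-- The canonical generators of the relatively free algebra. -/
def freeGen (V : Algebra S → Prop) (X : Type u) (x : X) :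
    (freeAlg V X).carrier :=
  Quotient.mk (eqThy V X).toSetoid (Tm.var x)

/-- The homomorphism from the relatively free algebra of `V` to an algebra
`B ∈ V` induced by an assignment of the generators. -/
def evalFreeHom (V : Algebra S → Prop) (X : Type u) (B : Algebra S)
    (hB : V B) (v : X → B.carrier) : Hom (freeAlg V X) B where
  toFun := Quotient.lift (fun t : Tm S X => t.eval B v) (fun s t h => h B hB v)
  map_interp o a := by
    show Tm.eval B v (Tm.app o (fun i => (a i).out)) = _
    simp only [Tm.eval]
    congr 1
    funext i
    conv_rhs => rw [← Quotient.out_eq (a i)]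
    rfl


/-- `B(μ)`: the subalgebra of `B × B` consisting of the pairs related by `μ`. -/
def pairAlg (B : Algebra S) (μ : Cong B) : Algebra S where
  carrier := {p : B.carrier × B.carrier // μ.r p.1 p.2}
  interp o a :=
    ⟨(B.interp o (fun i => (a i).1.1), B.interp o (fun i => (a i).1.2)),
      μ.compat o _ _ (fun i => (a i).2)⟩

/-- The first-coordinate projection `π_μ : B(μ) → B`. -/
def fstProj (B : Algebra S) (μ : Cong B) : Hom (pairAlg B μ) B :=
  ⟨fun p => p.1.1, fun _ _ => rfl⟩

/-- The second-coordinate projection `π : B(μ) → B`. -/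
def sndProj (B : Algebra S) (μ : Cong B) : Hom (pairAlg B μ) B :=
  ⟨fun p => p.1.2, fun _ _ => rfl⟩

/-- `Δ_{μ,α}`: the congruence on `B(μ)` generated by the pairs
`⟨(b, b), (b', b')⟩` with `b α b'`; equivalently, the kernel of the pushout of
the diagonal embedding `Δ : B → B(μ)` along the natural map `B → B/α`. -/
def deltaCong (B : Algebra S) (μ α : Cong B) : Cong (pairAlg B μ) :=
  conGen (pairAlg B μ) (fun p q =>
    p.1.1 = p.1.2 ∧ q.1.1 = q.1.2 ∧ α.r p.1.1 q.1.1)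

/-!
By Mal'cev's description of a generated congruence, `Δ_{α,μ}` on `B(α)` is the
equivalence closure of unary polynomial images of pairs `(a, a), (b, b)` with `a μ b`; for one such
step, `C(μ, α; ⊥)` says precisely that the image of `(a, a)` is diagonal iff that of `(b, b)` is.
So the diagonal of `B(α)` is a union of `Δ_{α,μ}`-classes.

In `B(θ)` with modular congruence lattice, the shifting lemma (the modular law for the kernels
`η₀, η₁` of the two projections, which meet in `⊥`) shows that a congruence whose classes saturate
the diagonal meets `η₀` in `⊥`. Transposing a polynomial step of `Δ_{μ,α}` on `B(μ)`, viewed as a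
`2 × 2` matrix over `B`, yields two `Δ_{α,μ}`-related rows in `B(α)` with equal first entries
exactly when the first column is diagonal; they are then equal, so the second column is diagonal.
Thus `Δ_{μ,α}` saturates the diagonal of `B(μ)` as well, and the shifting lemma in `B(μ)` gives
`η₀ ∧ Δ_{μ,α} = ⊥`.
-/

namespace Cong

variable {A : Algebra S}

theorem r_of_eq (c : Cong A) {x y : A.carrier} (h : x = y) : c.r x y :=
  h ▸ c.iseqv.refl x

theorem inf_r_iff {c d : Cong A} {x y : A.carrier} : (c ⊓ d).r x y ↔ c.r x y ∧ d.r x y := by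
  change (∀ e ∈ ({c, d} : Set (Cong A)), e.r x y) ↔ _
  simp

theorem bot_r_iff {x y : A.carrier} : (⊥ : Cong A).r x y ↔ x = y :=
  ⟨fun h => (bot_le : ⊥ ≤ Hom.ker ⟨id, fun _ _ => rfl⟩) x y h, (⊥ : Cong A).r_of_eq⟩

theorem eval_congr (c : Cong A) {X : Type v} {v w : X → A.carrier}
    (h : ∀ x, c.r (v x) (w x)) : ∀ t : Tm S X, c.r (t.eval A v) (t.eval A w)
  | .var x => h x
  | .app o t => c.compat o _ _ fun i => c.eval_congr h (t i)

end Cong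

theorem conGen_le {A : Algebra S} {s : A.carrier → A.carrier → Prop} {c : Cong A}
    (h : ∀ x y, s x y → c.r x y) : conGen A s ≤ c :=
  sInf_le h

theorem conGen_of {A : Algebra S} {s : A.carrier → A.carrier → Prop} {x y : A.carrier}
    (h : s x y) : (conGen A s).r x y :=
  fun _ hc => hc x y h

theorem conMap_le_iff {A B : Algebra S} {f : Hom A B} {c : Cong A} {d : Cong B} :
    conMap f c ≤ d ↔ c ≤ conComap f d :=
  ⟨fun h x y hxy => h _ _ (conGen_of ⟨x, y, hxy, rfl, rfl⟩),
    fun h => conGen_le fun _ _ ⟨x, y, hxy, hx, hy⟩ => hx ▸ hy ▸ h x y hxy⟩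

theorem centralizes_commutator {A : Algebra S} (μ α : Cong A) :
    Centralizes μ α (commutator μ α) :=
  fun n t a b c d hab hcd hδ δ hδ' => hδ' n t a b c d hab hcd (hδ δ hδ')

def Tm.rename {X Y : Type v} (f : X → Y) : Tm S X → Tm S Y
  | .var x => .var (f x)
  | .app o t => .app o fun i => (t i).rename f

theorem Tm.eval_rename {X Y : Type v} (f : X → Y) (A : Algebra S) (v : Y → A.carrier) :
    ∀ t : Tm S X, (t.rename f).eval A v = t.eval A (v ∘ f)
  | .var _ => rfl
  | .app o t => congrArg (A.interp o) (funext fun i => Tm.eval_rename f A v (t i))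

theorem Hom.map_eval {A B : Algebra S} (f : Hom A B) {X : Type v} (v : X → A.carrier) :
    ∀ t : Tm S X, f.toFun (t.eval A v) = t.eval B (f.toFun ∘ v)
  | .var _ => rfl
  | .app o t => by
    rw [Tm.eval, Tm.eval, f.map_interp]
    exact congrArg (B.interp o) (funext fun i => f.map_eval v (t i))

theorem rel_apply_of_forall_update {X ι : Type*} [Fintype ι] [DecidableEq ι]
    {R : X → X → Prop} (hrefl : ∀ x, R x x)
    (htrans : ∀ {x y z}, R x y → R y z → R x z) (F : (ι → X) → X)
    (hF : ∀ u j x y, R x y → R (F (Function.update u j x)) (F (Function.update u j y)))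
    {a b : ι → X} (hab : ∀ i, R (a i) (b i)) : R (F a) (F b) := by
  suffices ∀ s : Finset ι, R (F a) (F (s.piecewise b a)) by
    simpa using this Finset.univ
  intro s
  induction s using Finset.induction_on with
  | empty => simpa using hrefl (F a)
  | insert j s hj ih =>
    have hstep := hF (s.piecewise b a) j (a j) (b j) (hab j)
    rw [Function.update_eq_self_iff.2 (s.piecewise_eq_of_notMem _ _ hj).symm] at hstep
    rw [Finset.piecewise_insert]
    exact htrans ih hstep

section Malcev

variable {A : Algebra S} {s : A.carrier → A.carrier → Prop}

def PolyImage (A : Algebra S) (s : A.carrier → A.carrier → Prop) (x y : A.carrier) : Prop :=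
  ∃ (n : ℕ) (t : Tm S (Unit ⊕ Fin n)) (a b : A.carrier) (c : Fin n → A.carrier), s a b ∧
    t.eval A (Sum.elim (fun _ => a) c) = x ∧ t.eval A (Sum.elim (fun _ => b) c) = y

theorem PolyImage.of_rel {a b : A.carrier} (h : s a b) : PolyImage A s a b :=
  ⟨0, .var (.inl ()), a, b, Fin.elim0, h, rfl, rfl⟩

theorem PolyImage.symm (hs : ∀ a b, s a b → s b a) {x y : A.carrier} :
    PolyImage A s x y → PolyImage A s y x
  | ⟨n, t, a, b, c, hab, hx, hy⟩ => ⟨n, t, b, a, c, hs a b hab, hy, hx⟩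

theorem PolyImage.interp_update {x y : A.carrier} (h : PolyImage A s x y) (o : S.ops)
    (u : Fin (S.arity o) → A.carrier) (j : Fin (S.arity o)) :
    PolyImage A s (A.interp o (Function.update u j x)) (A.interp o (Function.update u j y)) := by
  obtain ⟨n, t, a, b, c, hab, rfl, rfl⟩ := h
  let T : Tm S (Unit ⊕ Fin (n + S.arity o)) := .app o fun i =>
    if i = j then t.rename (Sum.map id (Fin.castAdd _)) else .var (.inr (Fin.natAdd n i))
  have hT : ∀ e, T.eval A (Sum.elim (fun _ => e) (Fin.append c u)) =
      A.interp o (Function.update u j (t.eval A (Sum.elim (fun _ => e) c))) := by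
    intro e
    refine congrArg (A.interp o) (funext fun i => ?_)
    by_cases hi : i = j
    · subst hi
      simp only [if_true, Function.update_self, Tm.eval_rename]
      congr 1
      funext z
      rcases z with _ | l <;> simp [Fin.append_left]
    · simp [hi, Tm.eval]
  exact ⟨_, T, a, b, Fin.append c u, hab, hT a, hT b⟩

theorem eqvGen_polyImage_of_conGen {x y : A.carrier} (h : (conGen A s).r x y) :
    Relation.EqvGen (PolyImage A s) x y := by
  let chains : Cong A :=
    { r := Relation.EqvGen (PolyImage A s)
      iseqv := Relation.EqvGen.is_equivalence _
      compat := fun o a b hab =>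
        rel_apply_of_forall_update Relation.EqvGen.refl (.trans _ _ _)
          (A.interp o) (fun u j x y hxy => by
            induction hxy with
            | rel x y h => exact .rel _ _ (h.interp_update o u j)
            | refl => exact .refl _
            | symm _ _ _ ih => exact .symm _ _ ih
            | trans _ _ _ _ _ ih₁ ih₂ => exact .trans _ _ _ ih₁ ih₂) hab }
  exact (conGen_le (c := chains) fun _ _ hab => .rel _ _ (.of_rel hab)) x y h

theorem conGen_preserves (hs : ∀ a b, s a b → s b a) {P : A.carrier → Prop}
    (hP : ∀ x y, PolyImage A s x y → P x → P y) {x y : A.carrier} (h : (conGen A s).r x y) :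
    P x → P y := by
  have hiff : Equivalence fun x y => (P x ↔ P y) := ⟨fun _ => Iff.rfl, Iff.symm, Iff.trans⟩
  have hchain := (eqvGen_polyImage_of_conGen h).mono fun x y hxy =>
    show P x ↔ P y from ⟨hP x y hxy, hP y x (hxy.symm hs)⟩
  exact (hiff.eqvGen_iff.1 hchain).1

end Malcev

section PairAlg

variable {B : Algebra S} (θ : Cong B)

def diagPair (b : B.carrier) : (pairAlg B θ).carrier :=
  ⟨(b, b), θ.iseqv.refl b⟩

theorem sndProj_surjective : Function.Surjective (sndProj B θ).toFun :=
  fun b => ⟨diagPair θ b, rfl⟩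

theorem pairAlg_eval_elim_fst {X Y : Type v} (t : Tm S (X ⊕ Y))
    (f : X → (pairAlg B θ).carrier) (g : Y → (pairAlg B θ).carrier) :
    (t.eval (pairAlg B θ) (Sum.elim f g)).1.1 =
      t.eval B (Sum.elim (fun x => (f x).1.1) fun y => (g y).1.1) :=
  ((fstProj B θ).map_eval _ t).trans (by rw [Sum.comp_elim]; rfl)

theorem pairAlg_eval_elim_snd {X Y : Type v} (t : Tm S (X ⊕ Y))
    (f : X → (pairAlg B θ).carrier) (g : Y → (pairAlg B θ).carrier) :
    (t.eval (pairAlg B θ) (Sum.elim f g)).1.2 =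
      t.eval B (Sum.elim (fun x => (f x).1.2) fun y => (g y).1.2) :=
  ((sndProj B θ).map_eval _ t).trans (by rw [Sum.comp_elim]; rfl)

theorem IsVariety.pairAlg_mem {V : Algebra S → Prop} (hV : IsVariety V) (hB : V B) :
    V (pairAlg B θ) := by
  let square : Subuniverse (prodAlg fun _ : ULift.{u} Bool => B) :=
    { carrier := {f | θ.r (f ⟨false⟩) (f ⟨true⟩)}
      closed := fun o a ha => θ.compat o _ _ ha }
  let φ : Hom square.alg (pairAlg B θ) :=
    { toFun := fun f => ⟨(f.1 ⟨false⟩, f.1 ⟨true⟩), f.2⟩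
      map_interp := fun _ _ => rfl }
  refine hV.closed_hom _ _ φ ?_ (hV.closed_sub _ _ (hV.closed_prod _ _ fun _ => hB))
  rintro ⟨⟨b₁, b₂⟩, hb⟩
  exact ⟨⟨fun i => if i.down then b₂ else b₁, hb⟩, rfl⟩

theorem conMap_sndProj_ker_fstProj :
    conMap (sndProj B θ) (fstProj B θ).ker = θ := by
  refine le_antisymm (conMap_le_iff.2 fun p q (hpq : p.1.1 = q.1.1) => ?_) fun x y hxy => ?_
  · exact θ.iseqv.trans (θ.iseqv.symm p.2) (hpq ▸ q.2)
  · exact conGen_of ⟨diagPair θ x, ⟨(x, y), hxy⟩, rfl, rfl, rfl⟩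

theorem ker_fstProj_inf_ker_sndProj : (fstProj B θ).ker ⊓ (sndProj B θ).ker = ⊥ :=
  le_bot_iff.1 fun _ _ h =>
    Cong.bot_r_iff.2 (Subtype.ext (Prod.ext (Cong.inf_r_iff.1 h).1 (Cong.inf_r_iff.1 h).2))

def DiagonalSaturated (Ψ : Cong (pairAlg B θ)) : Prop :=
  ∀ p q, Ψ.r p q → p.1.1 = p.1.2 → q.1.1 = q.1.2

variable {θ}

theorem DiagonalSaturated.eq_of_fst_eq [IsModularLattice (Cong (pairAlg B θ))]
    {Ψ : Cong (pairAlg B θ)} (hΨ : DiagonalSaturated θ Ψ) {p q : (pairAlg B θ).carrier}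
    (hfst : p.1.1 = q.1.1) (hpq : Ψ.r p q) : p = q := by
  set η₀ := (fstProj B θ).ker
  set η₁ := (sndProj B θ).ker
  obtain ⟨⟨x, y⟩, hxy⟩ := p
  obtain ⟨⟨x', z⟩, hxz⟩ := q
  obtain rfl : x = x' := hfst
  have hyz : θ.r y z := θ.iseqv.trans (θ.iseqv.symm hxy) hxz
  have hsup : ((Ψ ⊓ η₀) ⊔ η₁).r (diagPair θ y) ⟨(y, z), hyz⟩ :=
    ((Ψ ⊓ η₀) ⊔ η₁).iseqv.trans
      (((Ψ ⊓ η₀) ⊔ η₁).iseqv.trans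
        ((le_sup_right : η₁ ≤ _) (diagPair θ y) ⟨(x, y), hxy⟩ rfl)
        ((le_sup_left : Ψ ⊓ η₀ ≤ _) _ _ (Cong.inf_r_iff.2 ⟨hpq, rfl⟩)))
      ((le_sup_right : η₁ ≤ _) ⟨(x, z), hxz⟩ _ rfl)
  -- the shifting lemma: modularity moves the `Ψ`-link from first coordinate `x` to `y`
  have hshift : (Ψ ⊓ η₀).r (diagPair θ y) ⟨(y, z), hyz⟩ := by
    have hmod : ((Ψ ⊓ η₀) ⊔ η₁) ⊓ η₀ = Ψ ⊓ η₀ := by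
      rw [sup_inf_assoc_of_le η₁ inf_le_right, inf_comm η₁, ker_fstProj_inf_ker_sndProj,
        sup_bot_eq]
    exact hmod ▸ Cong.inf_r_iff.2 ⟨hsup, rfl⟩
  obtain rfl : y = z := hΨ _ _ (Cong.inf_r_iff.1 hshift).1 rfl
  rfl

theorem DiagonalSaturated.ker_fstProj_inf_eq_bot [IsModularLattice (Cong (pairAlg B θ))]
    {Ψ : Cong (pairAlg B θ)} (hΨ : DiagonalSaturated θ Ψ) : (fstProj B θ).ker ⊓ Ψ = ⊥ :=
  le_bot_iff.1 fun _ _ h =>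
    Cong.bot_r_iff.2 (hΨ.eq_of_fst_eq (Cong.inf_r_iff.1 h).1 (Cong.inf_r_iff.1 h).2)

end PairAlg

section Delta

variable {B : Algebra S} {μ α : Cong B}

theorem deltaCong_diagPair {a b : B.carrier} (h : α.r a b) :
    (deltaCong B μ α).r (diagPair μ a) (diagPair μ b) :=
  conGen_of ⟨rfl, rfl, h⟩

theorem deltaCong_preserves {P : (pairAlg B μ).carrier → Prop}
    (hP : ∀ (n : ℕ) (t : Tm S (Unit ⊕ Fin n)) (a b : B.carrier)
      (c : Fin n → (pairAlg B μ).carrier), α.r a b →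
        P (t.eval _ (Sum.elim (fun _ => diagPair μ a) c)) →
        P (t.eval _ (Sum.elim (fun _ => diagPair μ b) c)))
    {p q : (pairAlg B μ).carrier} (hpq : (deltaCong B μ α).r p q) : P p → P q := by
  refine conGen_preserves (fun _ _ ⟨hp, hq, h⟩ => ⟨hq, hp, α.iseqv.symm h⟩) ?_ hpq
  rintro _ _ ⟨n, t, ⟨⟨a, a'⟩, _⟩, ⟨⟨b, b'⟩, _⟩, c, ⟨ha, hb, hab⟩, rfl, rfl⟩
  obtain rfl : a = a' := ha
  obtain rfl : b = b' := hb
  exact hP n t a b c hab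

theorem diagonalSaturated_deltaCong_of_centralizes (h : Centralizes μ α ⊥) :
    DiagonalSaturated α (deltaCong B α μ) := by
  intro p q hpq
  refine deltaCong_preserves (P := fun r => r.1.1 = r.1.2) (fun n t a b c hab hdiag => ?_) hpq
  rw [pairAlg_eval_elim_fst, pairAlg_eval_elim_snd] at hdiag ⊢
  exact Cong.bot_r_iff.1 (h n t a b (fun l => (c l).1.1) (fun l => (c l).1.2) hab
    (fun l => (c l).2) (Cong.bot_r_iff.2 hdiag))

theorem DiagonalSaturated.deltaCong_swap [IsModularLattice (Cong (pairAlg B α))]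
    (h : DiagonalSaturated α (deltaCong B α μ)) : DiagonalSaturated μ (deltaCong B μ α) := by
  intro p q hpq
  refine deltaCong_preserves (P := fun r => r.1.1 = r.1.2) (fun n t a b c hab hdiag => ?_) hpq
  rw [pairAlg_eval_elim_fst, pairAlg_eval_elim_snd] at hdiag ⊢
  -- the rows of the matrix with columns `t(a, c)` and `t(b, c)` are `Δ_{α,μ}`-related in `B(α)`
  let ab : (pairAlg B α).carrier := ⟨(a, b), hab⟩
  let row (i : B.carrier × B.carrier → B.carrier) : (pairAlg B α).carrier :=
    t.eval _ (Sum.elim (fun _ => ab) fun l => diagPair α (i (c l).1))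
  have hrows : (deltaCong B α μ).r (row Prod.fst) (row Prod.snd) := by
    refine Cong.eval_congr _ (fun x => ?_) t
    rcases x with _ | l
    · exact (deltaCong B α μ).iseqv.refl _
    · exact deltaCong_diagPair (c l).2
  have hfst : (row Prod.fst).1.1 = (row Prod.snd).1.1 := by
    dsimp only [row]
    rw [pairAlg_eval_elim_fst, pairAlg_eval_elim_fst]
    exact hdiag
  have hsnd := congrArg (fun r => r.1.2) (h.eq_of_fst_eq hfst hrows)
  dsimp only [row] at hsnd
  rwa [pairAlg_eval_elim_snd, pairAlg_eval_elim_snd] at hsnd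

end Delta

theorem conMap_sndProj_deltaCong {B : Algebra S} (μ α : Cong B) :
    conMap (sndProj B μ) (deltaCong B μ α) = α := by
  refine le_antisymm (conMap_le_iff.2 (conGen_le fun p q ⟨hp, hq, h⟩ => ?_)) fun x y hxy => ?_
  · exact show α.r p.1.2 q.1.2 from hp ▸ hq ▸ h
  · exact conGen_of ⟨diagPair μ x, diagPair μ y, deltaCong_diagPair hxy, rfl, rfl⟩

/-- In a congruence-modular variety `V`, if `[μ, α] = ⊥`, then
`α` laxly centralizes `μ`; specifically, `C = B(μ)`, the second projection
`π`, `β = ker π_μ` and `γ = Δ_{μ,α}` witness this: `→π β = μ`, `→π γ = α`,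
and `β ∧ γ = ⊥`. -/
theorem laxCentralizes_of_commutator_eq_bot {V : Algebra S → Prop}
    (hV : IsVariety V)
    (hmod : ∀ A : Algebra S, V A → IsModularLattice (Cong A))
    {B : Algebra S} (hB : V B) (μ α : Cong B)
    (h : commutator μ α = ⊥) :
    LaxCentralizes V B μ α ∧
    Function.Surjective (sndProj B μ).toFun ∧
    conMap (sndProj B μ) (fstProj B μ).ker = μ ∧
    conMap (sndProj B μ) (deltaCong B μ α) = α ∧
    (fstProj B μ).ker ⊓ deltaCong B μ α = ⊥ := by
  have hsat : DiagonalSaturated μ (deltaCong B μ α) :=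
    have := hmod _ (hV.pairAlg_mem α hB)
    (diagonalSaturated_deltaCong_of_centralizes (h ▸ centralizes_commutator μ α)).deltaCong_swap
  have := hmod _ (hV.pairAlg_mem μ hB)
  have hβγ := hsat.ker_fstProj_inf_eq_bot
  exact ⟨⟨pairAlg B μ, hV.pairAlg_mem μ hB, sndProj B μ, _, _, sndProj_surjective μ,
      (conMap_sndProj_ker_fstProj μ).ge, (conMap_sndProj_deltaCong μ α).ge, hβγ⟩,
    sndProj_surjective μ, conMap_sndProj_ker_fstProj μ, conMap_sndProj_deltaCong μ α, hβγ⟩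

end UAlg
end

section
/- Let C₀, C_β, C_γ be algebras of the same signature, let π_β : C_β → C₀/β₀ and π_γ : C_γ → C₀/γ₀ be surjective homomorphisms for congruences β₀, γ₀ on C₀ with β₀ ∧ γ₀ = ⊥, and let C = {(c, b, g) : c ∈ C₀, b ∈ C_β, g ∈ C_γ, c/β₀ = π_β(b), c/γ₀ = π_γ(g)} be the induced subalgebra of C₀ × C_β × C_γ, with π₁ : C → C₀ the first projection. Let β = ker((c,b,g) ↦ b) and γ = ker((c,b,g) ↦ g) as congruences on C. Then: π₁ is surjective, the map C → C_β × C_γ, (c,b,g) ↦ (b,g), is injective (so β ∧ γ = ⊥), the maps (c,b,g) ↦ b and (c,b,g) ↦ g are surjective onto C_β and C_γ, and →π₁ β = β₀ and →π₁ γ = γ₀. -/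
/-!
Basic universal algebra: signatures, algebras, homomorphisms, congruences
(forming a complete lattice), generated congruences, images and preimages of
congruences, quotient algebras, subalgebras, products, ultraproducts,
varieties (classes closed under H, S, P), the term-condition commutator,
relatively free algebras, and lax centrality.
-/

universe u v

namespace UAlg

variable {S : Signature.{u}}

theorem Cong.bot_r_iff_s11 {A : Algebra S} {x y : A.carrier} :
    (⊥ : Cong A).r x y ↔ x = y := by
  let eqCong : Cong A :=
    ⟨Eq, ⟨fun _ => rfl, Eq.symm, Eq.trans⟩, fun _ _ _ h => congrArg _ (funext h)⟩
  refine ⟨fun h => (bot_le : ⊥ ≤ eqCong) x y h, ?_⟩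
  rintro rfl
  exact (⊥ : Cong A).iseqv.refl x

theorem Cong.inf_r_iff_s11 {A : Algebra S} {c d : Cong A} {x y : A.carrier} :
    (c ⊓ d).r x y ↔ c.r x y ∧ d.r x y :=
  ⟨fun h => ⟨h c (by simp), h d (by simp)⟩, by
    rintro ⟨hc, hd⟩ e (rfl | rfl)
    exacts [hc, hd]⟩

theorem Hom.ker_inf_ker_eq_bot {A B C : Algebra S} {f : Hom A B} {g : Hom A C}
    (h : ∀ x y, f.toFun x = f.toFun y → g.toFun x = g.toFun y → x = y) :
    f.ker ⊓ g.ker = ⊥ :=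
  le_bot_iff.mp fun x y hxy =>
    Cong.bot_r_iff_s11.mpr (h x y (Cong.inf_r_iff_s11.mp hxy).1 (Cong.inf_r_iff_s11.mp hxy).2)

theorem natHom_eq_iff {A : Algebra S} {c : Cong A} {x y : A.carrier} :
    (natHom A c).toFun x = (natHom A c).toFun y ↔ c.r x y :=
  Quotient.eq

theorem conMap_ker_eq {A B C : Algebra S} {f : Hom A B} {h : Hom A C} {θ : Cong B}
    (map_le : ∀ p q, h.toFun p = h.toFun q → θ.r (f.toFun p) (f.toFun q))
    (lift : ∀ x y, θ.r x y →
      ∃ p q, h.toFun p = h.toFun q ∧ f.toFun p = x ∧ f.toFun q = y) :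
    conMap f h.ker = θ := by
  refine le_antisymm (sInf_le ?_) fun x y hxy θ' hθ' => hθ' x y (lift x y hxy)
  rintro x y ⟨p, q, hpq, rfl, rfl⟩
  exact map_le p q hpq

section Triple

variable (C₀ Cβ Cγ : Algebra S) (β₀ γ₀ : Cong C₀)
  (πβ : Hom Cβ (quotAlg C₀ β₀)) (πγ : Hom Cγ (quotAlg C₀ γ₀))

/-- The algebra `C = {(c, b, g) : c/β₀ = π_β(b), c/γ₀ = π_γ(g)}`, the induced
subalgebra of `C₀ × C_β × C_γ`. -/
noncomputable def tripleAlg : Algebra S where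
  carrier := {p : C₀.carrier × Cβ.carrier × Cγ.carrier //
    (natHom C₀ β₀).toFun p.1 = πβ.toFun p.2.1 ∧
    (natHom C₀ γ₀).toFun p.1 = πγ.toFun p.2.2}
  interp o a :=
    ⟨(C₀.interp o (fun i => (a i).1.1), Cβ.interp o (fun i => (a i).1.2.1),
        Cγ.interp o (fun i => (a i).1.2.2)), by
      constructor
      · rw [(natHom C₀ β₀).map_interp, πβ.map_interp]
        exact congrArg _ (funext fun i => (a i).2.1)
      · rw [(natHom C₀ γ₀).map_interp, πγ.map_interp]
        exact congrArg _ (funext fun i => (a i).2.2)⟩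

/-- The first projection `π₁ : C → C₀`. -/
noncomputable def tripleFst : Hom (tripleAlg C₀ Cβ Cγ β₀ γ₀ πβ πγ) C₀ :=
  ⟨fun p => p.1.1, fun _ _ => rfl⟩

/-- The projection `ν_β : C → C_β`, `(c, b, g) ↦ b`. -/
noncomputable def tripleSnd : Hom (tripleAlg C₀ Cβ Cγ β₀ γ₀ πβ πγ) Cβ :=
  ⟨fun p => p.1.2.1, fun _ _ => rfl⟩

/-- The projection `ν_γ : C → C_γ`, `(c, b, g) ↦ g`. -/
noncomputable def tripleTrd : Hom (tripleAlg C₀ Cβ Cγ β₀ γ₀ πβ πγ) Cγ :=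
  ⟨fun p => p.1.2.2, fun _ _ => rfl⟩

/-- The binary product of two algebras. -/
def prod2Alg (A B : Algebra S) : Algebra S where
  carrier := A.carrier × B.carrier
  interp o a := (A.interp o (fun i => (a i).1), B.interp o (fun i => (a i).2))

/-- The map `ι₁ : C → C_β × C_γ`, `(c, b, g) ↦ (b, g)`. -/
noncomputable def tripleEmb :
    Hom (tripleAlg C₀ Cβ Cγ β₀ γ₀ πβ πγ) (prod2Alg Cβ Cγ) :=
  ⟨fun p => (p.1.2.1, p.1.2.2), fun _ _ => rfl⟩

theorem exists_tripleAlg_of_fst_snd (hπγ : Function.Surjective πγ.toFun) {c : C₀.carrier}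
    {b : Cβ.carrier} (hcb : (natHom C₀ β₀).toFun c = πβ.toFun b) :
    ∃ p : (tripleAlg C₀ Cβ Cγ β₀ γ₀ πβ πγ).carrier, p.1.1 = c ∧ p.1.2.1 = b := by
  obtain ⟨g, hg⟩ := hπγ ((natHom C₀ γ₀).toFun c)
  exact ⟨⟨(c, b, g), hcb, hg.symm⟩, rfl, rfl⟩

theorem exists_tripleAlg_of_fst_trd (hπβ : Function.Surjective πβ.toFun) {c : C₀.carrier}
    {g : Cγ.carrier} (hcg : (natHom C₀ γ₀).toFun c = πγ.toFun g) :
    ∃ p : (tripleAlg C₀ Cβ Cγ β₀ γ₀ πβ πγ).carrier, p.1.1 = c ∧ p.1.2.2 = g := by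
  obtain ⟨b, hb⟩ := hπβ ((natHom C₀ β₀).toFun c)
  exact ⟨⟨(c, b, g), hb.symm, hcg⟩, rfl, rfl⟩

theorem tripleFst_surjective (hπβ : Function.Surjective πβ.toFun)
    (hπγ : Function.Surjective πγ.toFun) :
    Function.Surjective (tripleFst C₀ Cβ Cγ β₀ γ₀ πβ πγ).toFun := fun c => by
  obtain ⟨b, hb⟩ := hπβ ((natHom C₀ β₀).toFun c)
  obtain ⟨p, hp, -⟩ := exists_tripleAlg_of_fst_snd C₀ Cβ Cγ β₀ γ₀ πβ πγ hπγ hb.symm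
  exact ⟨p, hp⟩

theorem tripleSnd_surjective (hπγ : Function.Surjective πγ.toFun) :
    Function.Surjective (tripleSnd C₀ Cβ Cγ β₀ γ₀ πβ πγ).toFun := fun b => by
  obtain ⟨p, -, hp⟩ := exists_tripleAlg_of_fst_snd C₀ Cβ Cγ β₀ γ₀ πβ πγ hπγ
    (Quotient.out_eq (πβ.toFun b))
  exact ⟨p, hp⟩

theorem tripleTrd_surjective (hπβ : Function.Surjective πβ.toFun) :
    Function.Surjective (tripleTrd C₀ Cβ Cγ β₀ γ₀ πβ πγ).toFun := fun g => by
  obtain ⟨p, -, hp⟩ := exists_tripleAlg_of_fst_trd C₀ Cβ Cγ β₀ γ₀ πβ πγ hπβ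
    (Quotient.out_eq (πγ.toFun g))
  exact ⟨p, hp⟩

/-- `c` is determined by `c/β₀` and `c/γ₀`, hence by `b` and `g`. -/
theorem tripleEmb_injective (hβγ : β₀ ⊓ γ₀ = ⊥) :
    Function.Injective (tripleEmb C₀ Cβ Cγ β₀ γ₀ πβ πγ).toFun := by
  rintro ⟨⟨c, b, g⟩, hb, hg⟩ ⟨⟨c', b', g'⟩, hb', hg'⟩ h
  obtain ⟨rfl, rfl⟩ := Prod.mk.inj h
  have hβ : β₀.r c c' := natHom_eq_iff.mp (hb.trans hb'.symm)
  have hγ : γ₀.r c c' := natHom_eq_iff.mp (hg.trans hg'.symm)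
  obtain rfl : c = c' := Cong.bot_r_iff_s11.mp (hβγ ▸ Cong.inf_r_iff_s11.mpr ⟨hβ, hγ⟩)
  rfl

theorem tripleSnd_ker_inf_tripleTrd_ker (hβγ : β₀ ⊓ γ₀ = ⊥) :
    (tripleSnd C₀ Cβ Cγ β₀ γ₀ πβ πγ).ker ⊓ (tripleTrd C₀ Cβ Cγ β₀ γ₀ πβ πγ).ker = ⊥ :=
  Hom.ker_inf_ker_eq_bot fun _ _ hb hg =>
    tripleEmb_injective C₀ Cβ Cγ β₀ γ₀ πβ πγ hβγ (Prod.ext hb hg)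

theorem conMap_tripleFst_tripleSnd_ker (hπβ : Function.Surjective πβ.toFun)
    (hπγ : Function.Surjective πγ.toFun) :
    conMap (tripleFst C₀ Cβ Cγ β₀ γ₀ πβ πγ) (tripleSnd C₀ Cβ Cγ β₀ γ₀ πβ πγ).ker = β₀ := by
  refine conMap_ker_eq (fun p q hpq => natHom_eq_iff.mp ?_) fun x y hxy => ?_
  · exact p.2.1.trans ((congrArg πβ.toFun hpq).trans q.2.1.symm)
  obtain ⟨b, hb⟩ := hπβ ((natHom C₀ β₀).toFun x)
  obtain ⟨p, hpx, hpb⟩ := exists_tripleAlg_of_fst_snd C₀ Cβ Cγ β₀ γ₀ πβ πγ hπγ hb.symm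
  obtain ⟨q, hqy, hqb⟩ := exists_tripleAlg_of_fst_snd C₀ Cβ Cγ β₀ γ₀ πβ πγ hπγ
    ((natHom_eq_iff.mpr (β₀.iseqv.symm hxy)).trans hb.symm)
  exact ⟨p, q, hpb.trans hqb.symm, hpx, hqy⟩

theorem conMap_tripleFst_tripleTrd_ker (hπβ : Function.Surjective πβ.toFun)
    (hπγ : Function.Surjective πγ.toFun) :
    conMap (tripleFst C₀ Cβ Cγ β₀ γ₀ πβ πγ) (tripleTrd C₀ Cβ Cγ β₀ γ₀ πβ πγ).ker = γ₀ := by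
  refine conMap_ker_eq (fun p q hpq => natHom_eq_iff.mp ?_) fun x y hxy => ?_
  · exact p.2.2.trans ((congrArg πγ.toFun hpq).trans q.2.2.symm)
  obtain ⟨g, hg⟩ := hπγ ((natHom C₀ γ₀).toFun x)
  obtain ⟨p, hpx, hpg⟩ := exists_tripleAlg_of_fst_trd C₀ Cβ Cγ β₀ γ₀ πβ πγ hπβ hg.symm
  obtain ⟨q, hqy, hqg⟩ := exists_tripleAlg_of_fst_trd C₀ Cβ Cγ β₀ γ₀ πβ πγ hπβ
    ((natHom_eq_iff.mpr (γ₀.iseqv.symm hxy)).trans hg.symm)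
  exact ⟨p, q, hpg.trans hqg.symm, hpx, hqy⟩

/-- With `β₀ ∧ γ₀ = ⊥` and `π_β`, `π_γ` surjective: `π₁` is
surjective; `ι₁ : (c,b,g) ↦ (b,g)` is injective, and `β ∧ γ = ⊥` where
`β = ker((c,b,g) ↦ b)` and `γ = ker((c,b,g) ↦ g)`; the maps `(c,b,g) ↦ b` and
`(c,b,g) ↦ g` are surjective; and `→π₁ β = β₀` and `→π₁ γ = γ₀`. -/
theorem triple_properties (hβγ : β₀ ⊓ γ₀ = ⊥)
    (hπβ : Function.Surjective πβ.toFun)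
    (hπγ : Function.Surjective πγ.toFun) :
    Function.Surjective (tripleFst C₀ Cβ Cγ β₀ γ₀ πβ πγ).toFun ∧
    Function.Injective (tripleEmb C₀ Cβ Cγ β₀ γ₀ πβ πγ).toFun ∧
    (tripleSnd C₀ Cβ Cγ β₀ γ₀ πβ πγ).ker ⊓ (tripleTrd C₀ Cβ Cγ β₀ γ₀ πβ πγ).ker = ⊥ ∧
    Function.Surjective (tripleSnd C₀ Cβ Cγ β₀ γ₀ πβ πγ).toFun ∧
    Function.Surjective (tripleTrd C₀ Cβ Cγ β₀ γ₀ πβ πγ).toFun ∧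
    conMap (tripleFst C₀ Cβ Cγ β₀ γ₀ πβ πγ) (tripleSnd C₀ Cβ Cγ β₀ γ₀ πβ πγ).ker = β₀ ∧
    conMap (tripleFst C₀ Cβ Cγ β₀ γ₀ πβ πγ) (tripleTrd C₀ Cβ Cγ β₀ γ₀ πβ πγ).ker = γ₀ :=
  ⟨tripleFst_surjective C₀ Cβ Cγ β₀ γ₀ πβ πγ hπβ hπγ,
    tripleEmb_injective C₀ Cβ Cγ β₀ γ₀ πβ πγ hβγ,
    tripleSnd_ker_inf_tripleTrd_ker C₀ Cβ Cγ β₀ γ₀ πβ πγ hβγ,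
    tripleSnd_surjective C₀ Cβ Cγ β₀ γ₀ πβ πγ hπγ,
    tripleTrd_surjective C₀ Cβ Cγ β₀ γ₀ πβ πγ hπβ,
    conMap_tripleFst_tripleSnd_ker C₀ Cβ Cγ β₀ γ₀ πβ πγ hπβ hπγ,
    conMap_tripleFst_tripleTrd_ker C₀ Cβ Cγ β₀ γ₀ πβ πγ hπβ hπγ⟩

end Triple

end UAlg
end
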